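/- arXiv:math/9512228 — 2 statements merged into one kernel-verified Lean document; each statement's English description precedes it below -/
import Mathlib

section
/- Let α ∈ (0,1) be irrational, ℓ* ∈ ℕ, and let ζ > 0 be such that every rigid pair (H₀,H₁) with 1 ≤ |V(H₁)∖V(H₀)| ≤ ℓ* and type (v,e) satisfies v − αe ≤ −ζ. Fix ε with 0 < ε < ζ. For a graph G on [n] define P₀(G) = ∅ and P_{j+1}(G) = P_j(G) ∪ ⋃{ H ⊆ [n] : P_j(G) ⊆ H, 1 ≤ |H∖P_j(G)| ≤ ℓ*, and (G↾P_j(G), G↾H) is rigid }, and let P(G) = P_n(G). Then there exists ξ > 0 such that for all sufficiently large n, the probability that |P(G(n,n^{−α}))| > n^{ε} is at most e^{−n^{ξ}}. -/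
open FirstOrder Filter Finset Asymptotics
open scoped Classical

namespace RandomGraphPaper

/-- The set of potential (non-loop) edges on the vertex set `Fin n` (representing `[n]`). -/
def allEdges (n : ℕ) : Finset (Sym2 (Fin n)) := Finset.univ.filter (fun e => ¬ e.IsDiag)

/-- The probability that the Erdős–Rényi random graph `G(n,p)` satisfies the predicate `A`:
each of the potential edges is present independently with probability `p`, so a fixed
edge set `E` occurs with probability `p^|E| * (1-p)^(C(n,2)-|E|)`. -/
noncomputable def prob (n : ℕ) (p : ℝ) (A : SimpleGraph (Fin n) → Prop) : ℝ :=
  ∑ E ∈ (allEdges n).powerset,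
    if A (SimpleGraph.fromEdgeSet ↑E) then
      p ^ E.card * (1 - p) ^ ((allEdges n).card - E.card) else 0

/-- The probability that the random graph `G_{n,p}[G*_Q]` (whose restriction to `Q` is the
fixed graph `GQ`, with every other potential edge present independently with probability
`p`) satisfies the predicate `A`. -/
noncomputable def probQ (n : ℕ) (p : ℝ) (Q : Finset (Fin n)) (GQ : SimpleGraph (Fin n))
    (A : SimpleGraph (Fin n) → Prop) : ℝ :=
  ∑ E ∈ ((allEdges n) \ Q.sym2).powerset,
    if A (SimpleGraph.fromEdgeSet (↑E ∪ GQ.edgeSet)) then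
      p ^ E.card * (1 - p) ^ (((allEdges n) \ Q.sym2).card - E.card) else 0

/-- Satisfaction of a first-order sentence in the language of graphs by a simple graph. -/
def SatG {V : Type*} (G : SimpleGraph V) (ψ : Language.graph.Sentence) : Prop :=
  @FirstOrder.Language.Sentence.Realize Language.graph V G.structure ψ

variable {V : Type*} [Fintype V] [DecidableEq V]

/-- The `v` of the type over `Q` of the pair of induced subgraphs on `V0 ⊆ V1`:
`v = |V1 ∖ V0 ∖ Q|`. -/
def vType (Q V0 V1 : Finset V) : ℕ := ((V1 \ V0) \ Q).card

/-- The `e` of the type over `Q` of the pair `(H↾V0 , H↾V1)`: the number of pairs that are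
edges of `H` or of `GQ`, with both endpoints in `V1 ∪ Q` but not both in `V0 ∪ Q`. -/
noncomputable def eType (Q : Finset V) (GQ H : SimpleGraph V) (V0 V1 : Finset V) : ℕ :=
  (((V1 ∪ Q).sym2).filter
    (fun p => (p ∈ H.edgeSet ∨ p ∈ GQ.edgeSet) ∧ p ∉ (V0 ∪ Q).sym2)).card

/-- `(H↾V0, H↾V1)` is dense over `Q`: `v - α e < 0`. -/
noncomputable def DenseQ (α : ℝ) (Q : Finset V) (GQ H : SimpleGraph V) (V0 V1 : Finset V) :
    Prop :=
  (vType Q V0 V1 : ℝ) - α * eType Q GQ H V0 V1 < 0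

/-- `(H↾V0, H↾V1)` is sparse over `Q`: `v - α e > 0`. -/
noncomputable def SparseQ (α : ℝ) (Q : Finset V) (GQ H : SimpleGraph V) (V0 V1 : Finset V) :
    Prop :=
  0 < (vType Q V0 V1 : ℝ) - α * eType Q GQ H V0 V1

/-- `(H↾V0, H↾V1)` is safe over `Q`: every proper subextension is sparse over `Q`. -/
noncomputable def SafeQ (α : ℝ) (Q : Finset V) (GQ H : SimpleGraph V) (V0 V1 : Finset V) :
    Prop :=
  ∀ S : Finset V, V0 ⊆ S → S ⊆ V1 → V0 ≠ S → SparseQ α Q GQ H V0 S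

/-- `(H↾V0, H↾V1)` is rigid over `Q`: `(H↾S, H↾V1)` is dense over `Q` whenever
`V0 ⊆ S ⊊ V1`. -/
noncomputable def RigidQ (α : ℝ) (Q : Finset V) (GQ H : SimpleGraph V) (V0 V1 : Finset V) :
    Prop :=
  ∀ S : Finset V, V0 ⊆ S → S ⊆ V1 → S ≠ V1 → DenseQ α Q GQ H S V1

/-- The absolute (`Q = ∅`) notion: the pair of induced subgraphs `(H↾V0, H↾V1)` is rigid. -/
noncomputable def Rigid (α : ℝ) (H : SimpleGraph V) (V0 V1 : Finset V) : Prop :=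
  RigidQ α ∅ ⊥ H V0 V1

/-- One step of the closure iteration:
`Y ↦ Y ∪ ⋃ {H : Y ⊆ H, 1 ≤ |H∖Y| ≤ ℓ, (G↾Y,G↾H) rigid}`. -/
noncomputable def clStep (α : ℝ) (ℓ : ℕ) (G : SimpleGraph V) (Y : Finset V) : Finset V :=
  Y ∪ Finset.univ.filter (fun x => ∃ H : Finset V,
    Y ⊆ H ∧ 1 ≤ (H \ Y).card ∧ (H \ Y).card ≤ ℓ ∧ Rigid α G Y H ∧ x ∈ H)

/-- The closure `cl_ℓ(X;G)`, obtained by iterating the closure step `|V|` times. -/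
noncomputable def cl (α : ℝ) (ℓ : ℕ) (G : SimpleGraph V) (X : Finset V) : Finset V :=
  (clStep α ℓ G)^[Fintype.card V] X

/-- `N(f,H₀,H₁)` in `G`: the number of maps `g : V1 → [n]` extending `f` and sending every
edge of `H` (within `V1`) with at least one endpoint outside `V0` to an edge of `G`. -/
noncomputable def NExt {n : ℕ} (G H : SimpleGraph (Fin n)) (V0 V1 : Finset (Fin n))
    (f : Fin n → Fin n) : ℕ :=
  Finset.card (Finset.univ.filter (fun g : ↥V1 → Fin n =>
    (∀ x : ↥V1, (x : Fin n) ∈ V0 → g x = f x) ∧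
    (∀ x y : ↥V1, H.Adj x y → ¬((x : Fin n) ∈ V0 ∧ (y : Fin n) ∈ V0) → G.Adj (g x) (g y))))

/-- Condition `⊗¹_ℓ` for the graph `G` relative to `(Q, GQ)`: every safe pair over `Q`
already realized in `G` over `V0` has a (closure-respecting) generic extension in `G`. -/
noncomputable def Otimes1 {n : ℕ} (α : ℝ) (ℓ : ℕ) (Q : Finset (Fin n))
    (GQ G : SimpleGraph (Fin n)) : Prop :=
  ∀ (V0 V1 : Finset (Fin n)) (H : SimpleGraph (Fin n)),
    Q ⊆ V0 → V0 ⊆ V1 →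
    (∀ x y, H.Adj x y → x ∈ V1 ∧ y ∈ V1) →
    (V1 \ Q).card ≤ ℓ →
    SafeQ α Q GQ H V0 V1 →
    (∀ x y, H.Adj x y → x ∈ V0 → y ∈ V0 → G.Adj x y) →
    ∃ g : Fin n → Fin n,
      (∀ x ∈ V0, g x = x) ∧
      (∀ x y, H.Adj x y → ¬(x ∈ V0 ∧ y ∈ V0) → G.Adj (g x) (g y)) ∧
      cl α ℓ G (V1.image g) = V1.image g ∪ cl α ℓ G V0

/-- Condition `⊗²_ℓ` for the graph `G` relative to `(Q, GQ)`: no rigid extension of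
`H₀ = G*_Q` with at most `ℓ` new vertices embeds into `G` over the identity on `Q`. -/
noncomputable def Otimes2 {n : ℕ} (α : ℝ) (ℓ : ℕ) (Q : Finset (Fin n))
    (GQ G : SimpleGraph (Fin n)) : Prop :=
  ¬ ∃ (V1 : Finset (Fin n)) (H : SimpleGraph (Fin n)) (g : Fin n → Fin n),
      Q ⊆ V1 ∧ V1 ≠ Q ∧
      (∀ x y, H.Adj x y → x ∈ V1 ∧ y ∈ V1) ∧
      (∀ x ∈ Q, ∀ y ∈ Q, (H.Adj x y ↔ GQ.Adj x y)) ∧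
      (V1 \ Q).card ≤ ℓ ∧
      RigidQ α Q GQ H Q V1 ∧
      (∀ x ∈ Q, g x = x) ∧
      (∀ x y, H.Adj x y → ¬(x ∈ Q ∧ y ∈ Q) → G.Adj (g x) (g y))

/-- The type of relation symbols of the vocabulary `τ = {=,Q,R}`:
a unary symbol `Q` and a binary symbol `R`. -/
inductive tauRel : ℕ → Type
  | q : tauRel 1
  | rel : tauRel 2

/-- The vocabulary `τ = {=,Q,R}` (equality is built in). -/
def tau : Language := ⟨fun _ => Empty, tauRel⟩

/-- The `τ`-structure with domain `M`, unary predicate `Qp` and binary relation `Rp`. -/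
def tauStruct (M : Type*) (Qp : M → Prop) (Rp : M → M → Prop) : tau.Structure M where
  funMap := fun f _ => Empty.elim f
  RelMap := fun r x =>
    match r with
    | .q => Qp (x 0)
    | .rel => Rp (x 0) (x 1)

/-- Realization of a `τ`-formula in the `τ`-structure `(M, Qp, Rp)` at an assignment `v`. -/
def tauRealize {M : Type*} (Qp : M → Prop) (Rp : M → M → Prop) {m : ℕ}
    (θ : tau.Formula (Fin m)) (v : Fin m → M) : Prop :=
  @FirstOrder.Language.Formula.Realize tau M (tauStruct M Qp Rp) _ θ v

/-- Satisfaction of a `τ`-sentence in the `τ`-structure `(M, Qp, Rp)`. -/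
def tauSat (M : Type*) (Qp : M → Prop) (Rp : M → M → Prop) (θ : tau.Sentence) : Prop :=
  @FirstOrder.Language.Sentence.Realize tau M (tauStruct M Qp Rp) θ

/-- The quantifier depth of a first-order formula: atomic formulas have depth `0`,
connectives take the maximum, and a quantifier adds one. -/
def qdepth {L : Language} {α : Type*} : ∀ {k : ℕ}, L.BoundedFormula α k → ℕ
  | _, .falsum => 0
  | _, .equal _ _ => 0
  | _, .rel _ _ => 0
  | _, .imp φ₁ φ₂ => max (qdepth φ₁) (qdepth φ₂)
  | _, .all φ => qdepth φ + 1

/-- The restriction `G↾Q` of a graph to a set of vertices (keeping the ambient vertex type). -/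
def restrictG {n : ℕ} (G : SimpleGraph (Fin n)) (Q : Finset (Fin n)) : SimpleGraph (Fin n) where
  Adj x y := G.Adj x y ∧ x ∈ Q ∧ y ∈ Q
  symm := ⟨fun _ _ ⟨h, hx, hy⟩ => ⟨h.symm, hy, hx⟩⟩
  loopless := ⟨fun _ ⟨h, _⟩ => G.irrefl h⟩

/-! Call `T` dense if `(L + ζ) |T| ≤ L α e(T)`, where `e(T)` counts the edges inside `T` and
`L ≥ ℓ*`. Absorbing the rigid extensions that build `P(G)` one at a time into a dense set of
maximal size shows that `|P(G)| > t` forces a dense `T` with `t < |T| ≤ t + ℓ*`: by the gap `ζ`,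
each extension adds `v ≤ ℓ*` vertices and at least `(v + ζ) / α` edges. Such a `T` spans
`k ≥ t (1 + ζ / L) / α` edges, so for `t ≈ n^δ` a union bound over `T` and over `k`-sets of pairs
inside `T` bounds the probability by `ℓ* n^(t + ℓ*) (t + ℓ* + 1)^(2k) n^(-αk) = n^(-Ω(t))`. -/

section EdgeCounts

variable {W : Type*} [DecidableEq W]

noncomputable def numEdgesIn (G : SimpleGraph W) (T : Finset W) : ℕ :=
  #(T.sym2.filter (· ∈ G.edgeSet))

lemma eType_empty_bot (G : SimpleGraph W) (V0 V1 : Finset W) :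
    eType ∅ ⊥ G V0 V1 = #(V1.sym2.filter fun e => e ∈ G.edgeSet ∧ e ∉ V0.sym2) := by
  simp [eType]

lemma numEdgesIn_add_eType (G : SimpleGraph W) {T U : Finset W}
    (hTU : T ⊆ U) : numEdgesIn G T + eType ∅ ⊥ G T U = numEdgesIn G U := by
  rw [eType_empty_bot, numEdgesIn, numEdgesIn, ← filter_filter,
    ← card_filter_add_card_filter_not (s := U.sym2.filter (· ∈ G.edgeSet)) (· ∈ T.sym2),
    filter_filter, filter_filter]
  congr 2
  ext e
  simp only [mem_filter]
  exact ⟨fun ⟨he, hG⟩ => ⟨sym2_mono hTU he, hG, he⟩, fun ⟨_, hG, he⟩ => ⟨he, hG⟩⟩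

lemma Rigid.union_left {α : ℝ} (hα : 0 ≤ α) {G : SimpleGraph W}
    {Y H T : Finset W} (hR : Rigid α G Y H) (hYH : Y ⊆ H) (hYT : Y ⊆ T) :
    Rigid α G T (T ∪ H) := by
  intro S hTS hSU hne
  have hSH : S ∩ H ≠ H := fun h => hne <| hSU.antisymm <|
    union_subset hTS (h ▸ inter_subset_left)
  have hdense := hR (S ∩ H) (subset_inter (hYT.trans hTS) hYH) inter_subset_right hSH
  have hv : vType ∅ S (T ∪ H) = vType ∅ (S ∩ H) H := by
    unfold vType
    congr 1
    ext x
    simp only [Finset.mem_sdiff, Finset.mem_union, Finset.mem_inter, Finset.notMem_empty]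
    have := @hTS x
    tauto
  have he : eType ∅ ⊥ G (S ∩ H) H ≤ eType ∅ ⊥ G S (T ∪ H) := by
    rw [eType_empty_bot, eType_empty_bot]
    refine card_le_card fun e he => ?_
    obtain ⟨heH, heG, heS⟩ := mem_filter.1 he
    refine mem_filter.2 ⟨sym2_mono subset_union_right heH, heG, fun h => heS ?_⟩
    induction e using Sym2.ind with
    | _ x y =>
      simp only [mk_mem_sym2_iff, mem_inter] at *
      tauto
  unfold DenseQ at hdense ⊢
  rw [hv]
  nlinarith [(Nat.cast_le (α := ℝ)).2 he]

end EdgeCounts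

def HasRigidityGap (α ζ : ℝ) (ℓ : ℕ) : Prop :=
  ∀ (V : Type) [Fintype V] [DecidableEq V] (H : SimpleGraph V) (V0 V1 : Finset V),
    V0 ⊆ V1 → (∀ x y, H.Adj x y → x ∈ V1 ∧ y ∈ V1) →
    1 ≤ (V1 \ V0).card → (V1 \ V0).card ≤ ℓ → Rigid α H V0 V1 →
    ((V1 \ V0).card : ℝ) - α * eType ∅ ⊥ H V0 V1 ≤ -ζ

lemma HasRigidityGap.sub_le {α ζ : ℝ} {ℓ : ℕ} (hgap : HasRigidityGap α ζ ℓ) {W : Type}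
    [Fintype W] [DecidableEq W] (G : SimpleGraph W) {V0 V1 : Finset W} (hV : V0 ⊆ V1)
    (h1 : 1 ≤ #(V1 \ V0)) (hℓ : #(V1 \ V0) ≤ ℓ) (hR : Rigid α G V0 V1) :
    (#(V1 \ V0) : ℝ) - α * eType ∅ ⊥ G V0 V1 ≤ -ζ := by
  -- `G' = G↾V1`: the gap is only assumed for graphs without edges leaving `V1`.
  set G' := ((⊤ : G.Subgraph).induce (V1 : Set W)).spanningCoe
  have he : ∀ V0, eType ∅ ⊥ G' V0 V1 = eType ∅ ⊥ G V0 V1 := fun V0 => by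
    rw [eType_empty_bot, eType_empty_bot]
    congr 1
    refine filter_congr fun e he => ?_
    induction e using Sym2.ind with
    | _ x y =>
      rw [mk_mem_sym2_iff] at he
      simp [G', he.1, he.2]
  have hR' : Rigid α G' V0 V1 := fun S h1 h2 h3 => by
    have := hR S h1 h2 h3
    unfold DenseQ at this ⊢
    rwa [he]
  rw [← he]
  exact hgap W G' V0 V1 hV (fun x y h => by simpa [G'] using And.intro h.1 h.2.1) h1 hℓ hR'

section Dense

variable {W : Type} [Fintype W] [DecidableEq W] {α ζ L : ℝ} {ℓ : ℕ}

lemma dense_union_of_rigid (hgap : HasRigidityGap α ζ ℓ) (hα : 0 ≤ α) (hζ : 0 ≤ ζ)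
    (hL : (ℓ : ℝ) ≤ L) {G : SimpleGraph W} {Y H T : Finset W} (hR : Rigid α G Y H)
    (hYH : Y ⊆ H) (hYT : Y ⊆ T) (hHY : #(H \ Y) ≤ ℓ) (hHT : ¬ H ⊆ T)
    (hT : (L + ζ) * #T ≤ L * α * numEdgesIn G T) :
    (L + ζ) * #(T ∪ H) ≤ L * α * numEdgesIn G (T ∪ H) := by
  have hv : (T ∪ H) \ T = H \ T := union_sdiff_left T H
  have hv1 : 1 ≤ #((T ∪ H) \ T) := by
    obtain ⟨x, hxH, hxT⟩ := not_subset.1 hHT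
    exact card_pos.2 ⟨x, hv ▸ mem_sdiff.2 ⟨hxH, hxT⟩⟩
  have hvℓ : #((T ∪ H) \ T) ≤ ℓ :=
    hv ▸ (card_le_card (sdiff_subset_sdiff le_rfl hYT)).trans hHY
  have hgapTH := hgap.sub_le G subset_union_left hv1 hvℓ (hR.union_left hα hYH hYT)
  have hcard : (#(T ∪ H) : ℝ) = #T + #((T ∪ H) \ T) := by
    rw [← card_sdiff_add_card_eq_card (subset_union_left (s₂ := H))]
    push_cast
    ring
  have hedges : (numEdgesIn G (T ∪ H) : ℝ) = numEdgesIn G T + eType ∅ ⊥ G T (T ∪ H) := by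
    exact_mod_cast (numEdgesIn_add_eType G subset_union_left).symm
  have hv1ℓ : (#((T ∪ H) \ T) : ℝ) ≤ L := hL.trans' (by exact_mod_cast hvℓ)
  rw [hcard, hedges]
  nlinarith [mul_le_mul_of_nonneg_left hv1ℓ hζ, mul_le_mul_of_nonneg_left hgapTH
    ((Nat.cast_nonneg ℓ).trans hL)]

theorem exists_dense_of_lt_card_cl (hgap : HasRigidityGap α ζ ℓ) (hα : 0 ≤ α) (hζ : 0 ≤ ζ)
    (hL : (ℓ : ℝ) ≤ L) (G : SimpleGraph W) {t : ℕ} (ht : t < #(cl α ℓ G ∅)) :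
    ∃ T : Finset W, t < #T ∧ #T ≤ t + ℓ ∧ (L + ζ) * #T ≤ L * α * numEdgesIn G T := by
  by_contra! hsmall
  set 𝒮 := (univ : Finset (Finset W)).filter
    fun T => #T ≤ t + ℓ ∧ (L + ζ) * #T ≤ L * α * numEdgesIn G T
  obtain ⟨T, hT𝒮, hTmax⟩ := exists_max_image 𝒮 card
    ⟨∅, mem_filter.2 ⟨mem_univ _, by simp, by simp [numEdgesIn]⟩⟩
  obtain ⟨hTℓ, hTdense⟩ := (mem_filter.1 hT𝒮).2
  have hTt : #T ≤ t := not_lt.1 fun h => (hsmall T h hTℓ).not_ge hTdense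
  have hstep : Set.MapsTo (clStep α ℓ G) {Y | Y ⊆ T} {Y | Y ⊆ T} := by
    intro Y hYT x hx
    rcases mem_union.1 hx with hxY | hx
    · exact hYT hxY
    obtain ⟨H, hYH, -, hHY, hR, hxH⟩ := (mem_filter.1 hx).2
    by_contra hxT
    have hHT : ¬ H ⊆ T := fun h => hxT (h hxH)
    have hgrow : #T < #(T ∪ H) := card_lt_card
      (Finset.ssubset_iff_subset_ne.2 ⟨subset_union_left, fun h => hHT (h ▸ subset_union_right)⟩)
    have hTH : #(T ∪ H) ≤ t + ℓ := by
      rw [union_comm, ← card_sdiff_add_card]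
      have := card_le_card (sdiff_subset_sdiff (le_refl H) hYT)
      omega
    exact hgrow.not_ge <| hTmax _ <| mem_filter.2 ⟨mem_univ _, hTH,
      dense_union_of_rigid hgap hα hζ hL hR hYH hYT hHY hHT hTdense⟩
  have hcl : cl α ℓ G ∅ ⊆ T := hstep.iterate _ (empty_subset T)
  exact (card_le_card hcl).trans hTt |>.not_gt ht

lemma exists_numEdgesIn_ge_of_lt_card_cl (hgap : HasRigidityGap α ζ ℓ) (hα : 0 < α)
    (hζ : 0 ≤ ζ) (G : SimpleGraph W) {t : ℕ} (ht : t < #(cl α ℓ G ∅)) :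
    ∃ T : Finset W, t < #T ∧ #T ≤ t + ℓ ∧ ⌈t * (1 + ζ / (ℓ + 1)) / α⌉₊ ≤ numEdgesIn G T := by
  obtain ⟨T, hT, hTℓ, hTdense⟩ :=
    exists_dense_of_lt_card_cl hgap hα.le hζ (L := ℓ + 1) (by simp) G ht
  refine ⟨T, hT, hTℓ, Nat.ceil_le.2 <| (div_le_iff₀ hα).2 ?_⟩
  have htT : (t : ℝ) ≤ #T := by exact_mod_cast hT.le
  calc t * (1 + ζ / (ℓ + 1)) ≤ #T * (1 + ζ / (ℓ + 1)) := by gcongr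
    _ = ((ℓ + 1) + ζ) * #T / (ℓ + 1) := by field_simp
    _ ≤ (ℓ + 1) * α * numEdgesIn G T / (ℓ + 1) := by gcongr
    _ = numEdgesIn G T * α := by field_simp

end Dense

lemma card_filter_card_mem_Ioc_le (n t ℓ : ℕ) :
    #((univ : Finset (Finset (Fin n))).filter fun T => t < #T ∧ #T ≤ t + ℓ) ≤
      ℓ * n ^ (t + ℓ) := by
  have hsub : (univ : Finset (Finset (Fin n))).filter (fun T => t < #T ∧ #T ≤ t + ℓ) ⊆
      (Ioc t (t + ℓ)).biUnion fun m => univ.powersetCard m := fun T hT => by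
    simpa [mem_powersetCard_univ] using (mem_filter.1 hT).2
  calc _ ≤ _ := card_le_card hsub
    _ ≤ #(Ioc t (t + ℓ)) * n ^ (t + ℓ) := card_biUnion_le_card_mul _ _ _ fun m hm => by
        obtain ⟨htm, hmℓ⟩ := mem_Ioc.1 hm
        rw [card_powersetCard, card_univ, Fintype.card_fin]
        rcases n.eq_zero_or_pos with rfl | hn
        · simp [Nat.choose_eq_zero_of_lt (by omega : 0 < m)]
        · exact (Nat.choose_le_pow n m).trans (Nat.pow_le_pow_right hn hmℓ)
    _ = ℓ * n ^ (t + ℓ) := by rw [Nat.card_Ioc, Nat.add_sub_cancel_left]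

section Probability

variable {n : ℕ} {p : ℝ}

lemma prob_le_sum (hp0 : 0 ≤ p) (hp1 : p ≤ 1) {ι : Type*} (I : Finset ι)
    {A : SimpleGraph (Fin n) → Prop} {B : ι → SimpleGraph (Fin n) → Prop}
    (hAB : ∀ G, A G → ∃ i ∈ I, B i G) :
    prob n p A ≤ ∑ i ∈ I, prob n p (B i) := by
  unfold prob
  rw [sum_comm]
  refine sum_le_sum fun E _ => ?_
  have hw : 0 ≤ p ^ #E * (1 - p) ^ (#(allEdges n) - #E) :=
    mul_nonneg (pow_nonneg hp0 _) (pow_nonneg (sub_nonneg.2 hp1) _)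
  have hterm : ∀ i ∈ I, 0 ≤ if B i (SimpleGraph.fromEdgeSet ↑E) then
      p ^ #E * (1 - p) ^ (#(allEdges n) - #E) else 0 := fun i _ => by split_ifs <;> simp [hw]
  split_ifs with hA
  · obtain ⟨i, hi, hB⟩ := hAB _ hA
    simpa [hB] using single_le_sum hterm hi
  · exact sum_nonneg hterm

lemma prob_mono (hp0 : 0 ≤ p) (hp1 : p ≤ 1) {A B : SimpleGraph (Fin n) → Prop}
    (hAB : ∀ G, A G → B G) : prob n p A ≤ prob n p B := by
  simpa using prob_le_sum hp0 hp1 {()} (B := fun _ => B)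
    fun G hA => ⟨(), mem_singleton_self _, hAB G hA⟩

/-- Expanding `∏ e, (p + (1 - p) [e ∉ F])` over the potential edges gives, term by term,
the weights of the edge sets containing `F`. -/
lemma prob_subset_edgeSet {F : Finset (Sym2 (Fin n))} (hF : F ⊆ allEdges n) :
    prob n p (fun G => (F : Set (Sym2 (Fin n))) ⊆ G.edgeSet) = p ^ #F := by
  have hprod : ∏ e ∈ allEdges n, (p + if e ∈ F then 0 else 1 - p) = p ^ #F := by
    rw [prod_congr rfl fun e _ => show _ = if e ∈ F then p else 1 by
      split_ifs <;> ring,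
      prod_ite_mem, inter_eq_right.2 hF, prod_const]
  rw [← hprod, prod_add, prob]
  refine sum_congr rfl fun E hE => ?_
  rw [mem_powerset] at hE
  have hFE : (F : Set (Sym2 (Fin n))) ⊆ (SimpleGraph.fromEdgeSet (E : Set _)).edgeSet ↔ F ⊆ E := by
    rw [SimpleGraph.edgeSet_fromEdgeSet]
    constructor
    · intro h e he
      exact_mod_cast (h he).1
    · intro h e he
      exact ⟨by exact_mod_cast h he, (mem_filter.1 (hF he)).2⟩
  rw [prod_const, hFE]
  split_ifs with h
  · rw [prod_congr rfl fun e he => if_neg fun heF => (mem_sdiff.1 he).2 (h heF),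
      prod_const, card_sdiff_of_subset hE]
  · obtain ⟨e, heF, heE⟩ := not_subset.1 h
    rw [prod_eq_zero (mem_sdiff.2 ⟨hF heF, heE⟩) (by simp [heF]), mul_zero]

lemma prob_numEdgesIn_ge_le (hp0 : 0 ≤ p) (hp1 : p ≤ 1) (T : Finset (Fin n)) (k : ℕ) :
    prob n p (fun G => k ≤ numEdgesIn G T) ≤ ((#T + 1) ^ 2 * p) ^ k := by
  set P := T.sym2.filter (fun e => ¬ e.IsDiag)
  have hP : P ⊆ allEdges n := fun e he => by
    simpa [allEdges] using (mem_filter.1 he).2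
  calc prob n p (fun G => k ≤ numEdgesIn G T)
      ≤ ∑ F ∈ P.powersetCard k, prob n p (fun G => (F : Set (Sym2 (Fin n))) ⊆ G.edgeSet) := by
        refine prob_le_sum hp0 hp1 _ fun G hG => ?_
        obtain ⟨F, hFT, rfl⟩ := exists_subset_card_eq hG
        refine ⟨F, mem_powersetCard.2 ⟨fun e he => ?_, rfl⟩, fun e he => ?_⟩
        · obtain ⟨heT, heG⟩ := mem_filter.1 (hFT he)
          exact mem_filter.2 ⟨heT, G.not_isDiag_of_mem_edgeSet heG⟩
        · exact (mem_filter.1 (hFT he)).2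
    _ = (#P).choose k * p ^ k := by
        rw [sum_congr rfl fun F hF => prob_subset_edgeSet
          ((mem_powersetCard.1 hF).1.trans hP), sum_congr rfl fun F hF => by
          rw [(mem_powersetCard.1 hF).2], sum_const, card_powersetCard,
          nsmul_eq_mul]
    _ ≤ ((#T + 1) ^ 2 * p) ^ k := by
        rw [mul_pow]
        gcongr
        have hPT : #P ≤ (#T + 1) ^ 2 := calc
          #P ≤ #T.sym2 := card_filter_le _ _
          _ = (#T + 1).choose 2 := card_sym2 T
          _ ≤ (#T + 1) ^ 2 := Nat.choose_le_pow _ _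
        exact_mod_cast (Nat.choose_le_pow _ _).trans (Nat.pow_le_pow_left hPT k)

lemma prob_exists_numEdgesIn_ge_le (hp0 : 0 ≤ p) (hp1 : p ≤ 1) (t ℓ k : ℕ) :
    prob n p (fun G => ∃ T : Finset (Fin n), t < #T ∧ #T ≤ t + ℓ ∧ k ≤ numEdgesIn G T) ≤
      ℓ * n ^ (t + ℓ) * (((t + ℓ + 1 : ℕ) : ℝ) ^ 2 * p) ^ k := by
  set 𝒯 := (univ : Finset (Finset (Fin n))).filter fun T => t < #T ∧ #T ≤ t + ℓ
  calc _ ≤ ∑ T ∈ 𝒯, prob n p (fun G => k ≤ numEdgesIn G T) :=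
        prob_le_sum hp0 hp1 𝒯 fun G ⟨T, hT1, hT2, hk⟩ => ⟨T, by simp [𝒯, hT1, hT2], hk⟩
    _ ≤ ∑ _T ∈ 𝒯, (((t + ℓ + 1 : ℕ) : ℝ) ^ 2 * p) ^ k := by
        refine sum_le_sum fun T hT => (prob_numEdgesIn_ge_le hp0 hp1 T k).trans ?_
        have := (mem_filter.1 hT).2.2
        gcongr
        exact_mod_cast Nat.add_le_add_right this 1
    _ ≤ _ := by
        rw [sum_const, nsmul_eq_mul]
        gcongr
        exact_mod_cast card_filter_card_mem_Ioc_le n t ℓ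

end Probability

section Asymptotics

variable {α r δ : ℝ}

lemma add_mul_le_neg_mul (hα : 0 < α) (hr : 0 < r) (hδr : 8 * δ * (1 + r) ≤ r * α)
    {t k : ℝ} (ht : 0 ≤ t) (hk : t * (1 + r) ≤ α * k) :
    t + (4 * δ - α) * k ≤ -(r / 2 * t) := by
  have h4δ : 4 * δ ≤ α := by nlinarith
  have key : α * (t + (4 * δ - α) * k + r / 2 * t) ≤ 0 := by
    nlinarith [mul_nonneg (sub_nonneg.2 hk) (sub_nonneg.2 h4δ), mul_nonneg ht (sub_nonneg.2 hδr)]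
  nlinarith

lemma union_bound_le_exp (hα : 0 < α) (hr : 0 < r) (hδr : 8 * δ * (1 + r) ≤ r * α)
    {n t ℓ k : ℕ} (hn : Real.exp 1 ≤ n) (hℓn : (ℓ : ℝ) ≤ n) (hℓδ : (ℓ : ℝ) + 2 ≤ (n : ℝ) ^ δ)
    (ht : (t : ℝ) ≤ (n : ℝ) ^ δ) (ht' : (n : ℝ) ^ δ < t + 1) (hk : t * (1 + r) ≤ α * k)
    (hlarge : 1 + ℓ + r / 2 + (n : ℝ) ^ (δ / 2) ≤ r / 2 * (n : ℝ) ^ δ) :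
    (ℓ : ℝ) * n ^ (t + ℓ) * (((t + ℓ + 1 : ℕ) : ℝ) ^ 2 * (n : ℝ) ^ (-α)) ^ k ≤
      Real.exp (-(n : ℝ) ^ (δ / 2)) := by
  have hn1 : (1 : ℝ) ≤ n := (Real.one_lt_exp_iff.2 one_pos).le.trans hn
  have hn0 : (0 : ℝ) < n := one_pos.trans_le hn1
  have hbase : ((t + ℓ + 1 : ℕ) : ℝ) ^ 2 * (n : ℝ) ^ (-α) ≤ (n : ℝ) ^ (4 * δ - α) := by
    have hsq : ((t + ℓ + 1 : ℕ) : ℝ) ≤ (n : ℝ) ^ δ * (n : ℝ) ^ δ := by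
      push_cast
      nlinarith
    have hsplit : (n : ℝ) ^ (4 * δ - α) = ((n : ℝ) ^ δ * (n : ℝ) ^ δ) ^ 2 * (n : ℝ) ^ (-α) := by
      rw [← Real.rpow_add hn0, ← Real.rpow_natCast, ← Real.rpow_mul hn0.le, ← Real.rpow_add hn0]
      ring_nf
    rw [hsplit]
    gcongr
  have hexp : 1 + (t + ℓ : ℕ) + (4 * δ - α) * k ≤ -(n : ℝ) ^ (δ / 2) := by
    have := add_mul_le_neg_mul hα hr hδr (Nat.cast_nonneg t) hk
    push_cast
    nlinarith
  calc (ℓ : ℝ) * n ^ (t + ℓ) * (((t + ℓ + 1 : ℕ) : ℝ) ^ 2 * (n : ℝ) ^ (-α)) ^ k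
      ≤ n * n ^ (t + ℓ) * ((n : ℝ) ^ (4 * δ - α)) ^ k := by gcongr
    _ = (n : ℝ) ^ (1 + (t + ℓ : ℕ) + (4 * δ - α) * k) := by
        rw [Real.rpow_add hn0, Real.rpow_add hn0, Real.rpow_one, Real.rpow_natCast,
          Real.rpow_mul_natCast hn0.le]
    _ ≤ (n : ℝ) ^ (-(n : ℝ) ^ (δ / 2)) := Real.rpow_le_rpow_of_exponent_le hn1 hexp
    _ ≤ Real.exp (-(n : ℝ) ^ (δ / 2)) := by
        rw [Real.rpow_def_of_pos hn0, Real.exp_le_exp]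
        have hlog : 1 ≤ Real.log n := (Real.le_log_iff_exp_le hn0).2 hn
        nlinarith [Real.rpow_nonneg hn0.le (δ / 2)]

lemma eventually_union_bound_le_exp (hα : 0 < α) (hr : 0 < r) (hδ : 0 < δ)
    (hδr : 8 * δ * (1 + r) ≤ r * α) (ℓ : ℕ) :
    ∀ᶠ n : ℕ in atTop, ∀ t k : ℕ, (t : ℝ) ≤ (n : ℝ) ^ δ → (n : ℝ) ^ δ < t + 1 →
      t * (1 + r) ≤ α * k →
      (ℓ : ℝ) * n ^ (t + ℓ) * (((t + ℓ + 1 : ℕ) : ℝ) ^ 2 * (n : ℝ) ^ (-α)) ^ k ≤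
        Real.exp (-(n : ℝ) ^ (δ / 2)) := by
  have hpow : ∀ {s : ℝ}, 0 < s → Tendsto (fun n : ℕ => (n : ℝ) ^ s) atTop atTop := fun hs =>
    (tendsto_rpow_atTop hs).comp tendsto_natCast_atTop_atTop
  filter_upwards [tendsto_natCast_atTop_atTop.eventually_ge_atTop (Real.exp 1),
    tendsto_natCast_atTop_atTop.eventually_ge_atTop (ℓ : ℝ),
    (hpow hδ).eventually_ge_atTop ((ℓ : ℝ) + 2),
    (hpow (half_pos hδ)).eventually_ge_atTop (max 1 (4 * (1 + ℓ + r / 2 + 1) / r))]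
    with n hn hℓn hℓδ hx t k ht ht' hk
  refine union_bound_le_exp hα hr hδr hn hℓn hℓδ ht ht' hk ?_
  have hsq : (n : ℝ) ^ δ = ((n : ℝ) ^ (δ / 2)) ^ 2 := by
    rw [← Real.rpow_natCast, ← Real.rpow_mul (Nat.cast_nonneg n)]
    norm_num
  rw [hsq]
  obtain ⟨hx1, hxr⟩ := max_le_iff.1 hx
  rw [div_le_iff₀ hr] at hxr
  nlinarith

end Asymptotics

theorem statement9_general (α : ℝ) (hα0 : 0 < α)
    (ℓstar : ℕ) (ζ : ℝ) (hζ : 0 < ζ)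
    (hrigid : ∀ (V : Type) [Fintype V] [DecidableEq V] (H : SimpleGraph V)
      (V0 V1 : Finset V),
      V0 ⊆ V1 →
      (∀ x y, H.Adj x y → x ∈ V1 ∧ y ∈ V1) →
      1 ≤ (V1 \ V0).card → (V1 \ V0).card ≤ ℓstar →
      Rigid α H V0 V1 →
      ((V1 \ V0).card : ℝ) - α * eType ∅ ⊥ H V0 V1 ≤ -ζ)
    (ε : ℝ) (hε0 : 0 < ε) :
    ∃ ξ : ℝ, 0 < ξ ∧ ∃ N : ℕ, ∀ n : ℕ, N ≤ n →
      prob n ((n : ℝ) ^ (-α)) (fun G => (n : ℝ) ^ ε < ((cl α ℓstar G ∅).card : ℝ))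
        ≤ Real.exp (-(n : ℝ) ^ ξ) := by
  set r := ζ / (ℓstar + 1)
  set δ := min ε (r * α / (8 * (1 + r)))
  have hr : 0 < r := by positivity
  have hδ : 0 < δ := lt_min hε0 (by positivity)
  have hδr : 8 * δ * (1 + r) ≤ r * α := by
    have : δ ≤ r * α / (8 * (1 + r)) := min_le_right _ _
    rw [le_div_iff₀ (by positivity)] at this
    linarith
  obtain ⟨N, hN⟩ := eventually_atTop.1 (eventually_union_bound_le_exp hα0 hr hδ hδr ℓstar)
  refine ⟨δ / 2, half_pos hδ, max N 1, fun n hn => ?_⟩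
  have hn1 : (1 : ℝ) ≤ n := by exact_mod_cast le_of_max_le_right hn
  have hp0 : 0 ≤ (n : ℝ) ^ (-α) := Real.rpow_nonneg (Nat.cast_nonneg n) _
  have hp1 : (n : ℝ) ^ (-α) ≤ 1 := Real.rpow_le_one_of_one_le_of_nonpos hn1 (by linarith)
  set t := ⌊(n : ℝ) ^ δ⌋₊
  have ht : (t : ℝ) ≤ (n : ℝ) ^ δ := Nat.floor_le (by positivity)
  calc _ ≤ prob n ((n : ℝ) ^ (-α)) (fun G => ∃ T : Finset (Fin n),
          t < #T ∧ #T ≤ t + ℓstar ∧ ⌈t * (1 + r) / α⌉₊ ≤ numEdgesIn G T) :=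
        prob_mono hp0 hp1 fun G hG => exists_numEdgesIn_ge_of_lt_card_cl hrigid hα0 hζ.le G <| by
          exact_mod_cast ht.trans_lt
            ((Real.rpow_le_rpow_of_exponent_le hn1 (min_le_left _ _)).trans_lt hG)
    _ ≤ _ := prob_exists_numEdgesIn_ge_le hp0 hp1 _ _ _
    _ ≤ _ := hN n (le_of_max_le_left hn) _ _ ht (Nat.lt_floor_add_one _)
        ((div_le_iff₀' hα0).1 (Nat.le_ceil _))

/-- let `α ∈ (0,1)` be irrational, `ℓ* ∈ ℕ`, and `ζ > 0` be such that every
rigid pair with `1 ≤ |V1∖V0| ≤ ℓ*` and type `(v,e)` satisfies `v - αe ≤ -ζ`. Fix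
`0 < ε < ζ`. Let `P(G) = P_n(G)` where `P₀(G) = ∅` and `P_{j+1}(G)` adds all `H ⊇ P_j(G)`
with `1 ≤ |H∖P_j(G)| ≤ ℓ*` and `(G↾P_j(G), G↾H)` rigid (this is `cl α ℓ* G ∅`). Then
there is `ξ > 0` such that for all large enough `n`,
`Prob(|P(G(n,n^{-α}))| > n^ε) ≤ e^{-n^ξ}`. -/
theorem statement9 (α : ℝ) (hirr : Irrational α) (hα0 : 0 < α) (hα1 : α < 1)
    (ℓstar : ℕ) (ζ : ℝ) (hζ : 0 < ζ)
    (hrigid : ∀ (V : Type) [Fintype V] [DecidableEq V] (H : SimpleGraph V)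
      (V0 V1 : Finset V),
      V0 ⊆ V1 →
      (∀ x y, H.Adj x y → x ∈ V1 ∧ y ∈ V1) →
      1 ≤ (V1 \ V0).card → (V1 \ V0).card ≤ ℓstar →
      Rigid α H V0 V1 →
      ((V1 \ V0).card : ℝ) - α * eType ∅ ⊥ H V0 V1 ≤ -ζ)
    (ε : ℝ) (hε0 : 0 < ε) (hεζ : ε < ζ) :
    ∃ ξ : ℝ, 0 < ξ ∧ ∃ N : ℕ, ∀ n : ℕ, N ≤ n →
      prob n ((n : ℝ) ^ (-α)) (fun G => (n : ℝ) ^ ε < ((cl α ℓstar G ∅).card : ℝ))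
        ≤ Real.exp (-(n : ℝ) ^ ξ) :=
  statement9_general α hα0 ℓstar ζ hζ hrigid ε hε0

end RandomGraphPaper
end

section
/- Let α ∈ (0,1) be irrational, ℓ* ∈ ℕ, and let ζ > 0 be such that every rigid pair (H₀,H₁) with 1 ≤ |V(H₁)∖V(H₀)| ≤ ℓ* and type (v,e) satisfies v − αe ≤ −ζ. Let H be a finite graph with v vertices and e edges admitting a chain ∅ = A₀ ⊊ A₁ ⊊ ⋯ ⊊ A_M = V(H) such that for each i < M, |A_{i+1}∖A_i| ≤ ℓ* and the pair (H↾A_i, H↾A_{i+1}) is rigid. Then v − αe ≤ −ζ·M, and consequently the probability that G(n,n^{−α}) contains a subgraph isomorphic to H is at most n^{−ζM}. -/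
open FirstOrder Filter Finset Asymptotics
open scoped Classical

namespace RandomGraphPaper

variable {V : Type*} [Fintype V] [DecidableEq V]

/-!
Write `w(X) = |X| - α e(H↾X)`. The type of `(H↾X, H↾Y)` for `X ⊆ Y` is `w(Y) - w(X)`, so
`v - αe = w(V(H))` telescopes along the chain into `M` steps, each at most `-ζ` by the
hypothesis applied to `H↾A_{i+1}`. The probability bound is the first-moment bound: a fixed
injection `W → [n]` needs `e` prescribed edges, present with probability `p^e`, and there are
at most `n^v` injections, so the probability is at most `n^v p^e = n^(v - αe)`.
-/

lemma sum_fin_succ_sub_castSucc {G : Type*} [AddCommGroup G] {M : ℕ} (f : Fin (M + 1) → G) :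
    ∑ i : Fin M, (f i.succ - f i.castSucc) = f (Fin.last M) - f 0 := by
  induction M with
  | zero => simp
  | succ M ih =>
    rw [Fin.sum_univ_castSucc]
    simp only [Fin.succ_castSucc, ih fun j => f j.castSucc, Fin.castSucc_zero, Fin.succ_last]
    abel

section Weight

variable {W : Type*}

def inducedOn (H : SimpleGraph W) (U : Finset W) : SimpleGraph W where
  Adj x y := H.Adj x y ∧ x ∈ U ∧ y ∈ U
  symm := ⟨fun _ _ ⟨h, hx, hy⟩ => ⟨h.symm, hy, hx⟩⟩
  loopless := ⟨fun _ ⟨h, _⟩ => H.irrefl h⟩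

noncomputable def edgesWithin (H : SimpleGraph W) (X : Finset W) : Finset (Sym2 W) :=
  X.sym2.filter (· ∈ H.edgeSet)

noncomputable def weight (α : ℝ) (H : SimpleGraph W) (X : Finset W) : ℝ :=
  #X - α * #(edgesWithin H X)

lemma edgesWithin_inducedOn {H : SimpleGraph W} {U X : Finset W} (hX : X ⊆ U) :
    edgesWithin (inducedOn H U) X = edgesWithin H X := by
  ext e
  induction e using Sym2.ind with
  | h x y =>
    rw [edgesWithin, edgesWithin, mem_filter, mem_filter]
    simp only [mk_mem_sym2_iff, SimpleGraph.mem_edgeSet, inducedOn]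
    constructor
    · rintro ⟨hxy, h, -⟩
      exact ⟨hxy, h⟩
    · rintro ⟨hxy, h⟩
      exact ⟨hxy, h, hX hxy.1, hX hxy.2⟩

variable [Fintype W] {α ζ : ℝ}

lemma weight_univ (α : ℝ) (H : SimpleGraph W) [DecidableRel H.Adj] :
    weight α H univ = Fintype.card W - α * #H.edgeFinset := by
  have hedges : edgesWithin H univ = H.edgeFinset := by
    ext e
    simp [edgesWithin]
  rw [weight, hedges, card_univ]

lemma weight_univ_le_of_chain {H : SimpleGraph W} {M : ℕ} {A : Fin (M + 1) → Finset W}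
    (hA0 : A 0 = ∅) (hAM : A (Fin.last M) = univ)
    (hstep : ∀ i : Fin M, weight α H (A i.succ) - weight α H (A i.castSucc) ≤ -ζ) :
    weight α H univ ≤ -(ζ * M) :=
  calc weight α H univ
      = ∑ i : Fin M, (weight α H (A i.succ) - weight α H (A i.castSucc)) := by
        rw [sum_fin_succ_sub_castSucc (fun i => weight α H (A i)), hA0, hAM]
        simp [weight, edgesWithin]
    _ ≤ ∑ _i : Fin M, -ζ := sum_le_sum fun i _ => hstep i
    _ = -(ζ * M) := by simp [mul_comm]

variable [DecidableEq W]

lemma eType_eq_card_edgesWithin_filter (H : SimpleGraph W) (X Y : Finset W) :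
    eType ∅ ⊥ H X Y = #((edgesWithin H Y).filter (· ∉ X.sym2)) := by
  simp [eType, edgesWithin, filter_filter]

lemma eType_inducedOn {H : SimpleGraph W} {U X Y : Finset W} (hY : Y ⊆ U) :
    eType ∅ ⊥ (inducedOn H U) X Y = eType ∅ ⊥ H X Y := by
  simp only [eType_eq_card_edgesWithin_filter, edgesWithin_inducedOn hY]

lemma Rigid.inducedOn {H : SimpleGraph W} {X Y : Finset W} (h : Rigid α H X Y) :
    Rigid α (inducedOn H Y) X Y := fun S hXS hSY hne => by
  simpa only [DenseQ, eType_inducedOn subset_rfl] using h S hXS hSY hne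

lemma card_edgesWithin_add_eType (H : SimpleGraph W) {X Y : Finset W} (h : X ⊆ Y) :
    #(edgesWithin H X) + eType ∅ ⊥ H X Y = #(edgesWithin H Y) := by
  have hX : (edgesWithin H Y).filter (· ∈ X.sym2) = edgesWithin H X := by
    ext e
    simp only [edgesWithin, mem_filter]
    exact ⟨fun ⟨⟨_, he⟩, hX⟩ => ⟨hX, he⟩,
      fun ⟨hX, he⟩ => ⟨⟨sym2_mono h hX, he⟩, hX⟩⟩
  rw [eType_eq_card_edgesWithin_filter, ← hX, card_filter_add_card_filter_not]

lemma card_sdiff_sub_mul_eType (α : ℝ) (H : SimpleGraph W) {X Y : Finset W} (h : X ⊆ Y) :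
    (#(Y \ X) : ℝ) - α * eType ∅ ⊥ H X Y = weight α H Y - weight α H X := by
  rw [weight, weight, ← card_edgesWithin_add_eType H h, ← card_sdiff_add_card_eq_card h]
  push_cast
  ring

lemma weight_sub_le_of_rigid {ℓ : ℕ}
    (hrigid : ∀ (H : SimpleGraph W) (V0 V1 : Finset W), V0 ⊆ V1 →
      (∀ x y, H.Adj x y → x ∈ V1 ∧ y ∈ V1) → 1 ≤ #(V1 \ V0) → #(V1 \ V0) ≤ ℓ →
      Rigid α H V0 V1 → (#(V1 \ V0) : ℝ) - α * eType ∅ ⊥ H V0 V1 ≤ -ζ)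
    {H : SimpleGraph W} {X Y : Finset W} (hXY : X ⊂ Y) (hcard : #(Y \ X) ≤ ℓ)
    (hrig : Rigid α H X Y) :
    weight α H Y - weight α H X ≤ -ζ := by
  have hinduced := hrigid (inducedOn H Y) X Y hXY.subset (fun _ _ h => h.2)
    (card_pos.2 (sdiff_nonempty.2 hXY.not_subset)) hcard hrig.inducedOn
  rwa [eType_inducedOn subset_rfl, card_sdiff_sub_mul_eType α H hXY.subset] at hinduced

end Weight

section Probability

lemma sum_powerset_ite_subset {γ : Type*} [DecidableEq γ] {S F : Finset γ} (hF : F ⊆ S)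
    (p : ℝ) :
    ∑ E ∈ S.powerset, (if F ⊆ E then p ^ #E * (1 - p) ^ (#S - #E) else 0) = p ^ #F := by
  have hexpand := prod_add (fun _ => p) (fun i => if i ∈ F then 0 else 1 - p) S
  have hprod : ∏ i ∈ S, (p + if i ∈ F then 0 else 1 - p) = p ^ #F :=
    calc ∏ i ∈ S, (p + if i ∈ F then 0 else 1 - p) = ∏ i ∈ S, if i ∈ F then p else 1 :=
          prod_congr rfl fun i _ => by split_ifs <;> ring
      _ = p ^ #F := by rw [prod_ite_mem, inter_eq_right.2 hF, prod_const]
  rw [← hprod, hexpand]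
  refine sum_congr rfl fun E hE => ?_
  rw [prod_const]
  split_ifs with hFE
  · rw [prod_congr rfl fun i hi => if_neg fun hiF => (mem_sdiff.1 hi).2 (hFE hiF), prod_const,
      card_sdiff_of_subset (mem_powerset.1 hE)]
  · obtain ⟨i, hiF, hiE⟩ := not_subset.1 hFE
    rw [prod_eq_zero (f := fun i => if i ∈ F then (0 : ℝ) else 1 - p)
      (mem_sdiff.2 ⟨hF hiF, hiE⟩) (if_pos hiF), mul_zero]

variable {n : ℕ} {p : ℝ}

lemma prob_fin_zero (p : ℝ) (A : SimpleGraph (Fin 0) → Prop) :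
    prob 0 p A = if A (SimpleGraph.fromEdgeSet ∅) then 1 else 0 := by
  simp [prob, allEdges]

lemma prob_exists_le (hp0 : 0 ≤ p) (hp1 : p ≤ 1) {ι : Type*} (I : Finset ι)
    (A : ι → SimpleGraph (Fin n) → Prop) :
    prob n p (fun G => ∃ i ∈ I, A i G) ≤ ∑ i ∈ I, prob n p (A i) := by
  unfold prob
  rw [sum_comm]
  refine sum_le_sum fun E _ => ?_
  have hw : 0 ≤ p ^ #E * (1 - p) ^ (#(allEdges n) - #E) :=
    mul_nonneg (pow_nonneg hp0 _) (pow_nonneg (sub_nonneg.2 hp1) _)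
  have hterm : ∀ i ∈ I, 0 ≤ if A i (SimpleGraph.fromEdgeSet ↑E) then
      p ^ #E * (1 - p) ^ (#(allEdges n) - #E) else 0 := fun i _ => by
    split_ifs
    exacts [hw, le_rfl]
  split_ifs with h
  · obtain ⟨i, hi, hA⟩ := h
    simpa only [if_pos hA] using single_le_sum hterm hi
  · exact sum_nonneg hterm

lemma prob_superset_edgeSet {F : Finset (Sym2 (Fin n))} (hF : F ⊆ allEdges n) (p : ℝ) :
    prob n p (fun G => ↑F ⊆ G.edgeSet) = p ^ #F := by
  rw [← sum_powerset_ite_subset hF p, prob]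
  refine sum_congr rfl fun E _ => if_congr ?_ rfl rfl
  rw [SimpleGraph.edgeSet_fromEdgeSet, Set.subset_sdiff, coe_subset]
  refine and_iff_left_of_imp fun _ => Set.disjoint_left.2 fun e he => ?_
  simpa [allEdges] using hF he

lemma edgeFinset_subset_allEdges (G : SimpleGraph (Fin n)) [Fintype G.edgeSet] :
    G.edgeFinset ⊆ allEdges n := fun _ he => by
  simpa [allEdges] using G.not_isDiag_of_mem_edgeSet (SimpleGraph.mem_edgeFinset.1 he)

lemma prob_exists_map_le {W : Type*} [Fintype W] [DecidableEq W] (H : SimpleGraph W)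
    [DecidableRel H.Adj] (hp0 : 0 ≤ p) (hp1 : p ≤ 1) :
    prob n p (fun G => ∃ f : W ↪ Fin n, H.map f ≤ G)
      ≤ n.descFactorial (Fintype.card W) * p ^ #H.edgeFinset :=
  calc prob n p (fun G => ∃ f : W ↪ Fin n, H.map f ≤ G)
      ≤ prob n p (fun G =>
          ∃ f ∈ (univ : Finset (W ↪ Fin n)), ↑(H.map f).edgeFinset ⊆ G.edgeSet) :=
        prob_mono hp0 hp1 fun G ⟨f, hf⟩ => ⟨f, mem_univ f,
          by rw [SimpleGraph.coe_edgeFinset]; exact SimpleGraph.edgeSet_subset_edgeSet.2 hf⟩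
    _ ≤ ∑ f : W ↪ Fin n, prob n p (fun G => ↑(H.map f).edgeFinset ⊆ G.edgeSet) :=
        prob_exists_le hp0 hp1 _ _
    _ = ∑ _f : W ↪ Fin n, p ^ #H.edgeFinset := sum_congr rfl fun f _ => by
        rw [prob_superset_edgeSet (edgeFinset_subset_allEdges _), SimpleGraph.card_edgeFinset_map]
    _ = n.descFactorial (Fintype.card W) * p ^ #H.edgeFinset := by
        simp [Fintype.card_embedding_eq]

lemma prob_copy_le_rpow {W : Type*} [Fintype W] [DecidableEq W] (H : SimpleGraph W)
    [DecidableRel H.Adj] {α : ℝ} (hα : 0 ≤ α) (hn : 0 < n) :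
    prob n ((n : ℝ) ^ (-α)) (fun G => ∃ f : W → Fin n, Function.Injective f ∧
        ∀ x y, H.Adj x y → G.Adj (f x) (f y))
      ≤ (n : ℝ) ^ ((Fintype.card W : ℝ) - α * #H.edgeFinset) := by
  have hn' : (1 : ℝ) ≤ n := by exact_mod_cast hn
  have hp0 : 0 ≤ (n : ℝ) ^ (-α) := by positivity
  have hp1 : (n : ℝ) ^ (-α) ≤ 1 := Real.rpow_le_one_of_one_le_of_nonpos hn' (neg_nonpos.2 hα)
  calc _ ≤ prob n ((n : ℝ) ^ (-α)) (fun G => ∃ f : W ↪ Fin n, H.map f ≤ G) :=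
        prob_mono hp0 hp1 fun G ⟨f, hf, hadj⟩ =>
          ⟨⟨f, hf⟩, (SimpleGraph.map_le_iff_le_comap _ _ _).2 fun x y h => hadj x y h⟩
    _ ≤ n.descFactorial (Fintype.card W) * ((n : ℝ) ^ (-α)) ^ #H.edgeFinset :=
        prob_exists_map_le H hp0 hp1
    _ ≤ (n : ℝ) ^ Fintype.card W * ((n : ℝ) ^ (-α)) ^ #H.edgeFinset := by
        gcongr
        exact_mod_cast Nat.descFactorial_le_pow _ _
    _ = (n : ℝ) ^ ((Fintype.card W : ℝ) - α * #H.edgeFinset) := by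
        rw [sub_eq_add_neg, Real.rpow_add (by positivity), neg_mul_eq_neg_mul,
          Real.rpow_mul (by positivity), Real.rpow_natCast, Real.rpow_natCast]

end Probability

theorem statement10_general (α : ℝ) (hα0 : 0 < α)
    (ℓstar : ℕ) (ζ : ℝ)
    (hrigid : ∀ (V : Type) [Fintype V] [DecidableEq V] (H : SimpleGraph V)
      (V0 V1 : Finset V),
      V0 ⊆ V1 →
      (∀ x y, H.Adj x y → x ∈ V1 ∧ y ∈ V1) →
      1 ≤ (V1 \ V0).card → (V1 \ V0).card ≤ ℓstar →
      Rigid α H V0 V1 →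
      ((V1 \ V0).card : ℝ) - α * eType ∅ ⊥ H V0 V1 ≤ -ζ)
    (W : Type) [Fintype W] [DecidableEq W] (H : SimpleGraph W) [DecidableRel H.Adj]
    (M : ℕ) (A : Fin (M + 1) → Finset W)
    (hA0 : A 0 = ∅) (hAM : A (Fin.last M) = Finset.univ)
    (hchain : ∀ i : Fin M, A i.castSucc ⊂ A i.succ)
    (hcard : ∀ i : Fin M, (A i.succ \ A i.castSucc).card ≤ ℓstar)
    (hrig : ∀ i : Fin M, Rigid α H (A i.castSucc) (A i.succ)) :
    ((Fintype.card W : ℝ) - α * H.edgeFinset.card ≤ -(ζ * M)) ∧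
    ∀ n : ℕ,
      prob n ((n : ℝ) ^ (-α)) (fun G => ∃ f : W → Fin n, Function.Injective f ∧
          ∀ x y, H.Adj x y → G.Adj (f x) (f y))
        ≤ (n : ℝ) ^ (-(ζ * M)) := by
  have hweight : (Fintype.card W : ℝ) - α * #H.edgeFinset ≤ -(ζ * M) := by
    rw [← weight_univ]
    exact weight_univ_le_of_chain hA0 hAM fun i =>
      weight_sub_le_of_rigid (hrigid W) (hchain i) (hcard i) (hrig i)
  refine ⟨hweight, fun n => ?_⟩
  rcases n.eq_zero_or_pos with rfl | hn
  · rw [prob_fin_zero]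
    rcases M.eq_zero_or_pos with rfl | hM
    · split_ifs <;> norm_num
    · obtain ⟨x, -, -⟩ := exists_of_ssubset (hchain ⟨0, hM⟩)
      rw [if_neg fun ⟨f, _⟩ => (f x).elim0]
      exact Real.rpow_nonneg (Nat.cast_nonneg 0) _
  · exact (prob_copy_le_rpow H hα0.le hn).trans
      (Real.rpow_le_rpow_of_exponent_le (by exact_mod_cast hn) hweight)

/-- let `α ∈ (0,1)` be irrational, `ℓ* ∈ ℕ`, and `ζ > 0` be such that every
rigid pair with `1 ≤ |V1∖V0| ≤ ℓ*` and type `(v,e)` satisfies `v - αe ≤ -ζ`. Let `H` be a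
finite graph with `v` vertices and `e` edges admitting a chain
`∅ = A₀ ⊊ A₁ ⊊ ⋯ ⊊ A_M = V(H)` with `|A_{i+1}∖A_i| ≤ ℓ*` and `(H↾A_i, H↾A_{i+1})` rigid
for each `i < M`. Then `v - αe ≤ -ζM`, and consequently the probability that
`G(n,n^{-α})` contains a subgraph isomorphic to `H` is at most `n^{-ζM}`. -/
theorem statement10 (α : ℝ) (hirr : Irrational α) (hα0 : 0 < α) (hα1 : α < 1)
    (ℓstar : ℕ) (ζ : ℝ) (hζ : 0 < ζ)
    (hrigid : ∀ (V : Type) [Fintype V] [DecidableEq V] (H : SimpleGraph V)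
      (V0 V1 : Finset V),
      V0 ⊆ V1 →
      (∀ x y, H.Adj x y → x ∈ V1 ∧ y ∈ V1) →
      1 ≤ (V1 \ V0).card → (V1 \ V0).card ≤ ℓstar →
      Rigid α H V0 V1 →
      ((V1 \ V0).card : ℝ) - α * eType ∅ ⊥ H V0 V1 ≤ -ζ)
    (W : Type) [Fintype W] [DecidableEq W] (H : SimpleGraph W) [DecidableRel H.Adj]
    (M : ℕ) (A : Fin (M + 1) → Finset W)
    (hA0 : A 0 = ∅) (hAM : A (Fin.last M) = Finset.univ)
    (hchain : ∀ i : Fin M, A i.castSucc ⊂ A i.succ)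
    (hcard : ∀ i : Fin M, (A i.succ \ A i.castSucc).card ≤ ℓstar)
    (hrig : ∀ i : Fin M, Rigid α H (A i.castSucc) (A i.succ)) :
    ((Fintype.card W : ℝ) - α * H.edgeFinset.card ≤ -(ζ * M)) ∧
    ∀ n : ℕ,
      prob n ((n : ℝ) ^ (-α)) (fun G => ∃ f : W → Fin n, Function.Injective f ∧
          ∀ x y, H.Adj x y → G.Adj (f x) (f y))
        ≤ (n : ℝ) ^ (-(ζ * M)) :=
  statement10_general α hα0 ℓstar ζ hrigid W H M A hA0 hAM hchain hcard hrig

end RandomGraphPaper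
end
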